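/- Let R be a finite ring with identity, J(R) its Jacobson radical, and A a subset of R; let Ā denote the image of A in R/J(R) under the quotient map. Then Ā is a maximal independent set of the unitary Cayley graph Γ(R/J(R)) if and only if A + J(R) is a maximal independent set of Γ(R). -/

import Mathlib

open Pointwise

/-- The unitary Cayley graph of a ring `R`: vertices are elements of `R`,
and `x`, `y` are adjacent iff `x - y` is a unit. -/
def unitaryCayley (R : Type*) [Ring R] : SimpleGraph R where
  Adj x y := x ≠ y ∧ IsUnit (x - y)
  symm := by
    constructor
    rintro x y ⟨hne, hu⟩
    exact ⟨hne.symm, by simpa [neg_sub] using hu.neg⟩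
  loopless := by constructor; rintro x ⟨h, -⟩; exact h rfl

/-- A set of vertices is independent if its elements are pairwise nonadjacent. -/
def IsIndepSet {V : Type*} (G : SimpleGraph V) (A : Set V) : Prop :=
  A.Pairwise fun x y => ¬ G.Adj x y

/-- A maximal independent set. -/
def IsMaxIndepSet {V : Type*} (G : SimpleGraph V) (A : Set V) : Prop :=
  IsIndepSet G A ∧ ∀ B : Set V, IsIndepSet G B → A ⊆ B → A = B

/-- A graph is well-covered if all its maximal independent sets have the same cardinality. -/
def WellCovered {V : Type*} (G : SimpleGraph V) : Prop :=
  ∀ A B : Set V, IsMaxIndepSet G A → IsMaxIndepSet G B → A.ncard = B.ncard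

/-- The reduced `k`-diagonal matrix `D_k(a)`:  the `(i, j)` entry is `a (i - k)`
when `j = i + k` (mod `n`) and `i ≠ k`, and `0` otherwise. -/
def Dmat {n : ℕ} (F : Type*) [Field F] (k : Fin n) (a : Fin n → F) :
    Matrix (Fin n) (Fin n) F :=
  Matrix.of fun i j => if i ≠ k ∧ j = i + k then a (i - k) else 0

/-- The family `𝒟` of all reduced diagonal matrices `D_k(a₁, …, a_{n-1})`. -/
def DSet {n : ℕ} (F : Type*) [Field F] : Set (Matrix (Fin n) (Fin n) F) :=
  {M | ∃ (k : Fin n) (a : Fin n → F), M = Dmat F k a}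

/-- The Jacobson radical of a (possibly noncommutative) ring, as a two-sided ideal. -/
noncomputable def jacRad (R : Type*) [Ring R] : TwoSidedIdeal R :=
  (⊥ : TwoSidedIdeal R).jacobson

/-- The quotient of `R` by its Jacobson radical. -/
abbrev JacQuot (R : Type*) [Ring R] := (jacRad R).ringCon.Quotient

/-- The quotient map `R → R/J(R)`. -/
noncomputable def jacMk (R : Type*) [Ring R] : R →+* JacQuot R := (jacRad R).ringCon.mk'

/-!
Units lift modulo the Jacobson radical and `J(R)` contains no units of a nontrivial ring, so
`x - y` is a unit of `R` iff its image is a unit of `R/J(R)` and then `x`, `y` have distinct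
images: `Γ(R)` is the pullback of `Γ(R/J(R))` along the quotient map. Since `A + J(R)` is the
preimage of `Ā`, it remains to see that for a surjection `f`, a preimage `f⁻¹ S` is a maximal
independent set of the pulled-back graph iff `S` is one of the original graph.
-/

section Graph

variable {V W : Type*} (H : SimpleGraph W) {f : V → W}

lemma isIndepSet_comap_preimage (S : Set W) (hS : IsIndepSet H S) :
    IsIndepSet (H.comap f) (f ⁻¹' S) := fun _ hx _ hy _ hadj =>
  hS hx hy (H.ne_of_adj hadj) hadj

lemma isIndepSet_image_of_comap (B : Set V)
    (hB : IsIndepSet (H.comap f) B) : IsIndepSet H (f '' B) := by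
  rintro _ ⟨x, hx, rfl⟩ _ ⟨y, hy, rfl⟩ hne hadj
  exact hB hx hy (fun h => hne (congrArg f h)) hadj

lemma isMaxIndepSet_comap_preimage_iff (hf : Function.Surjective f) (S : Set W) :
    IsMaxIndepSet (H.comap f) (f ⁻¹' S) ↔ IsMaxIndepSet H S := by
  constructor
  · rintro ⟨hS, hmax⟩
    refine ⟨Set.image_preimage_eq S hf ▸ isIndepSet_image_of_comap H _ hS,
      fun B hB hSB => Set.preimage_injective.mpr hf ?_⟩
    exact hmax _ (isIndepSet_comap_preimage H B hB) (Set.preimage_mono hSB)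
  · rintro ⟨hS, hmax⟩
    refine ⟨isIndepSet_comap_preimage H S hS, fun B hB hSB => ?_⟩
    have hSfB : S = f '' B :=
      hmax _ (isIndepSet_image_of_comap H B hB) (Set.image_preimage_eq S hf ▸ Set.image_mono hSB)
    exact hSB.antisymm (hSfB ▸ Set.subset_preimage_image f B)

end Graph

section Jacobson

variable {R : Type*} [Ring R]

lemma jacMk_eq_jacMk_iff {x y : R} : jacMk R x = jacMk R y ↔ x - y ∈ jacRad R :=
  RingCon.eq _ |>.trans (TwoSidedIdeal.rel_iff _ x y)

lemma jacMk_surjective : Function.Surjective (jacMk R) := RingCon.mk'_surjective _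

lemma exists_mul_eq_one_of_sub_one_mem_jacRad {x : R} (hx : x - 1 ∈ jacRad R) :
    ∃ z, z * x = 1 := by
  obtain ⟨z, hz⟩ := TwoSidedIdeal.mem_jacobson_iff.mp hx 1
  refine ⟨z, ?_⟩
  rw [TwoSidedIdeal.mem_bot, mul_one, mul_sub, mul_one, sub_add_cancel, sub_eq_zero] at hz
  exact hz

/-- Elements that are `1` modulo `J(R)` have left inverses, which are again `1` modulo `J(R)`;
so the left inverse itself has a left inverse, forcing it to be two-sided. -/
lemma isUnit_of_sub_one_mem_jacRad {x : R} (hx : x - 1 ∈ jacRad R) : IsUnit x := by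
  obtain ⟨z, hzx⟩ := exists_mul_eq_one_of_sub_one_mem_jacRad hx
  have hz : z - 1 ∈ jacRad R := by
    have : z - 1 = -(z * (x - 1)) := by rw [mul_sub, hzx, mul_one, neg_sub]
    exact this ▸ (jacRad R).neg_mem ((jacRad R).mul_mem_left z _ hx)
  obtain ⟨w, hwz⟩ := exists_mul_eq_one_of_sub_one_mem_jacRad hz
  have hxz : x * z = 1 := left_inv_eq_right_inv hwz hzx ▸ hwz
  exact isUnit_iff_exists.mpr ⟨z, hxz, hzx⟩

lemma not_isUnit_of_mem_jacRad [Nontrivial R] {j : R} (hj : j ∈ jacRad R) : ¬IsUnit j := by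
  rintro ⟨u, rfl⟩
  have hone : (1 : R) ∈ jacRad R := by
    simpa using (jacRad R).mul_mem_left (↑u⁻¹ : R) _ hj
  exact not_isUnit_zero
    (isUnit_of_sub_one_mem_jacRad (x := (0 : R)) (by simpa using (jacRad R).neg_mem hone))

lemma isUnit_jacMk_iff {x : R} : IsUnit (jacMk R x) ↔ IsUnit x := by
  refine ⟨fun hx => ?_, fun hx => hx.map _⟩
  obtain ⟨y', hxy', hyx'⟩ := isUnit_iff_exists.mp hx
  obtain ⟨y, rfl⟩ := jacMk_surjective y'
  have lift_one {a : R} (ha : jacMk R a = 1) : IsUnit a :=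
    isUnit_of_sub_one_mem_jacRad (jacMk_eq_jacMk_iff.mp (ha.trans (map_one _).symm))
  obtain ⟨r, hr⟩ := (lift_one ((map_mul _ x y).trans hxy')).exists_right_inv
  obtain ⟨l, hl⟩ := (lift_one ((map_mul _ y x).trans hyx')).exists_left_inv
  rw [mul_assoc] at hr
  rw [← mul_assoc] at hl
  exact isUnit_iff_exists_and_exists.mpr ⟨⟨_, hr⟩, ⟨_, hl⟩⟩

lemma unitaryCayley_jacQuot_comap :
    (unitaryCayley (JacQuot R)).comap (jacMk R) = unitaryCayley R := by
  ext x y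
  change jacMk R x ≠ jacMk R y ∧ IsUnit (jacMk R x - jacMk R y) ↔ x ≠ y ∧ IsUnit (x - y)
  rw [← map_sub, isUnit_jacMk_iff, ne_eq, jacMk_eq_jacMk_iff]
  refine and_congr_left fun hunit => ⟨fun h hxy => h (by simp [hxy]), fun hxy hmem => ?_⟩
  have : Nontrivial R := ⟨⟨x, y, hxy⟩⟩
  exact not_isUnit_of_mem_jacRad hmem hunit

lemma add_jacRad_eq_preimage_image (A : Set R) :
    A + (jacRad R : Set R) = jacMk R ⁻¹' (jacMk R '' A) := by
  ext b
  simp only [Set.mem_add, SetLike.mem_coe, Set.mem_preimage, Set.mem_image, jacMk_eq_jacMk_iff]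
  constructor
  · rintro ⟨a, ha, j, hj, rfl⟩
    exact ⟨a, ha, by simpa using (jacRad R).neg_mem hj⟩
  · rintro ⟨a, ha, hab⟩
    exact ⟨a, ha, b - a, by simpa using (jacRad R).neg_mem hab, add_sub_cancel a b⟩

end Jacobson

theorem stmt8_general (R : Type*) [Ring R] (A : Set R) :
    IsMaxIndepSet (unitaryCayley (JacQuot R)) (jacMk R '' A) ↔
      IsMaxIndepSet (unitaryCayley R) (A + (jacRad R : Set R)) := by
  rw [add_jacRad_eq_preimage_image, ← unitaryCayley_jacQuot_comap (R := R),
    isMaxIndepSet_comap_preimage_iff _ jacMk_surjective]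

theorem stmt8 (R : Type*) [Ring R] [Finite R] (A : Set R) :
    IsMaxIndepSet (unitaryCayley (JacQuot R)) (jacMk R '' A) ↔
      IsMaxIndepSet (unitaryCayley R) (A + (jacRad R : Set R)) :=
  stmt8_general R A
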